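/- arXiv:1904.03112 — 11 statements merged into one kernel-verified Lean document; each statement's English description precedes it below -/
import Mathlib

section
/- Let R be a multiset of records, I a finset of items, and z an item with z ∈ I. Then s(I, R) = s({z}, R) (i.e., z is a covered item of I in R) if and only if every record r of R (with positive multiplicity) that contains z satisfies I ⊆ r. -/
variable {α : Type*} [DecidableEq α]

/-- Support of an itemset `I` in a record chunk `R`: the number of records
of `R`, counted with multiplicity, that are supersets of `I`. -/
def supp (I : Finset α) (R : Multiset (Finset α)) : ℕ :=
  (R.filter fun r => I ⊆ r).card

theorem covered_item_iff
    (R : Multiset (Finset α)) (I : Finset α) (z : α) (hz : z ∈ I) :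
    supp I R = supp {z} R ↔ ∀ r ∈ R, z ∈ r → I ⊆ r := by
  have hle : R.filter (fun r => I ⊆ r) ≤ R.filter (fun r => ({z} : Finset α) ⊆ r) := by
    apply Multiset.monotone_filter_right
    intro r hr
    simp only [Finset.singleton_subset_iff]
    exact hr hz
  constructor
  · intro hcard r hrR hzr
    have heq : R.filter (fun r => I ⊆ r) = R.filter (fun r => ({z} : Finset α) ⊆ r) :=
      Multiset.eq_of_le_of_card_le hle (le_of_eq hcard.symm)
    have : r ∈ R.filter (fun r => ({z} : Finset α) ⊆ r) := by
      rw [Multiset.mem_filter]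
      exact ⟨hrR, Finset.singleton_subset_iff.mpr hzr⟩
    rw [← heq, Multiset.mem_filter] at this
    exact this.2
  · intro h
    unfold supp
    congr 1
    apply Multiset.filter_congr
    intro r hr
    constructor
    · intro hIr; exact Finset.singleton_subset_iff.mpr (hIr hz)
    · intro hzr; exact h r hr (Finset.singleton_subset_iff.mp hzr)
end

section
/- Let T be a multiset of records, I a finset of items, and z an item with z ∈ I. If every record r of T that contains z satisfies I ⊆ r, then for every finset of items Y one has s({z} ∪ Y, T) = s(I ∪ Y, T). In particular, any itemset that is associated with the covered item z in a record of T is in fact associated with the whole itemset I in that record. -/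
variable {α : Type*} [DecidableEq α]

theorem covered_item_association
    (T : Multiset (Finset α)) (I : Finset α) (z : α) (hz : z ∈ I)
    (h : ∀ r ∈ T, z ∈ r → I ⊆ r) :
    ∀ Y : Finset α, supp ({z} ∪ Y) T = supp (I ∪ Y) T := by
  intro Y
  unfold supp
  congr 1
  apply Multiset.filter_congr
  intro r hr
  constructor
  · intro hs
    have hzr : z ∈ r := hs (by simp)
    exact Finset.union_subset (h r hr hzr) (Finset.union_subset_iff.mp hs).2
  · intro hs
    exact Finset.union_subset (Finset.singleton_subset_iff.mpr
      ((Finset.union_subset_iff.mp hs).1 hz)) (Finset.union_subset_iff.mp hs).2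
end

section
/- Let R be a multiset of records and I a finset of items with |I| ≥ 2. Then the following are equivalent: (i) for every z ∈ I, s(I, R) < s({z}, R) (i.e., R has no covered item of I, so R is not subject to a cover problem for I); (ii) for every z ∈ I there exists x ∈ I with x ≠ z and s({x, z}, R) < s({z}, R). -/
variable {α : Type*} [DecidableEq α]

lemma supp_anti {J K : Finset α} (h : J ⊆ K) (R : Multiset (Finset α)) :
    supp K R ≤ supp J R := by
  apply Multiset.card_le_card
  apply Multiset.monotone_filter_right
  intro r hr
  exact h.trans hr

theorem no_cover_problem_iff
    (R : Multiset (Finset α)) (I : Finset α) (hI : 2 ≤ I.card) :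
    (∀ z ∈ I, supp I R < supp {z} R) ↔
      (∀ z ∈ I, ∃ x ∈ I, x ≠ z ∧ supp {x, z} R < supp {z} R) := by
  constructor
  · intro h z hz
    by_contra hc
    push_neg at hc
    -- for each x ∈ I, x ≠ z, supp {x,z} = supp {z}
    have key : ∀ x ∈ I, ∀ r ∈ R, z ∈ r → x ∈ r := by
      intro x hx r hr hzr
      rcases eq_or_ne x z with rfl | hxz
      · exact hzr
      · have hle := hc x hx hxz
        have hge : supp {x, z} R ≤ supp ({z} : Finset α) R := by
          apply supp_anti
          intro a ha
          simp at ha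
          simp [ha]
        have heq : supp {x, z} R = supp ({z} : Finset α) R := le_antisymm hge hle
        have hfle : R.filter (fun r => ({x, z} : Finset α) ⊆ r)
            ≤ R.filter (fun r => ({z} : Finset α) ⊆ r) := by
          apply Multiset.monotone_filter_right
          intro r hr a ha
          apply hr
          simp at ha
          simp [ha]
        have hfeq := Multiset.eq_of_le_of_card_le hfle (le_of_eq heq.symm)
        have hrmem : r ∈ R.filter (fun r => ({z} : Finset α) ⊆ r) := by
          rw [Multiset.mem_filter]
          exact ⟨hr, by simpa using hzr⟩
        rw [← hfeq, Multiset.mem_filter] at hrmem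
        have := hrmem.2
        exact this (by simp)
    have heqI : supp I R = supp ({z} : Finset α) R := by
      unfold supp
      congr 1
      apply Multiset.filter_congr
      intro r hr
      constructor
      · intro hsub
        simpa using hsub hz
      · intro hsub a ha
        exact key a ha r hr (by simpa using hsub (by simp))
    have := h z hz
    omega
  · intro h z hz
    obtain ⟨x, hx, hxz, hlt⟩ := h z hz
    have : supp I R ≤ supp {x, z} R := by
      apply supp_anti
      intro a ha
      simp at ha
      rcases ha with rfl | rfl
      exacts [hx, hz]
    omega
end

section
/- In the partial suppression setup, the support of every single item of I is unchanged: for every x ∈ I, s({x}, R') = s({x}, R). -/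
variable {α : Type*} [DecidableEq α]

/-
Each item `x ∈ I` lies in exactly one part `P i₀`, so `x` survives in all but one of the `c`
records `I \ P i`, and it lies in exactly one of the two ghost records `L₁`, `L₂`. The new records
thus contribute `(c - 1) + 1 = c` to the support of `{x}`, exactly what the `c` removed copies of
`I` contributed.
-/

theorem supp_add (J : Finset α) (A B : Multiset (Finset α)) :
    supp J (A + B) = supp J A + supp J B := by
  simp only [supp, Multiset.filter_add, Multiset.card_add]

theorem supp_nsmul_singleton_of_subset {J r : Finset α} (n : ℕ) (h : J ⊆ r) :
    supp J (n • {r}) = n := by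
  rw [supp, Multiset.nsmul_singleton, Multiset.filter_eq_self.mpr, Multiset.card_replicate]
  intro s hs
  rwa [Multiset.eq_of_mem_replicate hs]

theorem supp_singleton_pair_of_disjoint {L₁ L₂ : Finset α} {x : α} (hx : x ∈ L₁ ∪ L₂)
    (hL : Disjoint L₁ L₂) : supp {x} {L₁, L₂} = 1 := by
  rcases Finset.mem_union.mp hx with h₁ | h₂
  · have h₂ : x ∉ L₂ := Finset.disjoint_left.mp hL h₁
    simp [supp, Multiset.filter_singleton, h₁, h₂]
  · have h₁ : x ∉ L₁ := Finset.disjoint_right.mp hL h₂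
    simp [supp, Multiset.filter_singleton, h₁, h₂]

theorem supp_singleton_map_sdiff_of_pairwiseDisjoint {ι : Type*} [Fintype ι] [DecidableEq ι]
    {I : Finset α} {P : ι → Finset α} {x : α} {i₀ : ι} (hx : x ∈ I)
    (hP : Pairwise (Function.onFun Disjoint P)) (hi₀ : x ∈ P i₀) :
    supp {x} (Finset.univ.val.map fun i => I \ P i) = Fintype.card ι - 1 := by
  have hfilter : Finset.univ.filter (fun i => x ∉ P i) = Finset.univ.erase i₀ := by
    ext i
    suffices x ∉ P i ↔ i ≠ i₀ by simpa
    exact ⟨fun h hi => h (hi ▸ hi₀), fun hi h => Finset.disjoint_left.mp (hP hi) h hi₀⟩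
  rw [supp, Multiset.filter_map, Multiset.card_map]
  simp only [Function.comp_def, Finset.singleton_subset_iff, Finset.mem_sdiff, hx, true_and]
  rw [← Finset.filter_val, Finset.card_val, hfilter,
    Finset.card_erase_of_mem (Finset.mem_univ _), Finset.card_univ]

theorem partial_suppression_single_support_general
    (I : Finset α)
    (c : ℕ)
    (P : Fin c → Finset α)
    (hPdisj : ∀ i j : Fin c, i ≠ j → Disjoint (P i) (P j))
    (hPunion : Finset.univ.biUnion P = I)
    (L₁ L₂ : Finset α)
    (hLunion : L₁ ∪ L₂ = I) (hLdisj : L₁ ∩ L₂ = ∅)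
    (R : Multiset (Finset α))
    (hR : c • ({I} : Multiset (Finset α)) ≤ R)
    (R' : Multiset (Finset α))
    (hR' : R' = (R - c • ({I} : Multiset (Finset α)))
      + (Finset.univ.val.map fun i : Fin c => I \ P i)
      + {L₁, L₂})
    :
    ∀ x ∈ I, supp {x} R' = supp {x} R := by
  intro x hx
  obtain ⟨i₀, -, hi₀⟩ := Finset.mem_biUnion.mp (hPunion ▸ hx)
  have hparts := supp_singleton_map_sdiff_of_pairwiseDisjoint hx hPdisj hi₀
  have hghosts := supp_singleton_pair_of_disjoint (hLunion ▸ hx)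
    (Finset.disjoint_iff_inter_eq_empty.mpr hLdisj)
  have hcopies := supp_nsmul_singleton_of_subset c (Finset.singleton_subset_iff.mpr hx)
  conv_rhs => rw [← tsub_add_cancel_of_le hR, supp_add, hcopies]
  rw [hR', supp_add, supp_add, hparts, hghosts, Fintype.card_fin]
  have : 0 < c := i₀.pos
  omega

theorem partial_suppression_single_support
    (I : Finset α) (hI : 2 ≤ I.card)
    (c : ℕ) (hc : c = (I.card + 1) / 2)
    (P : Fin c → Finset α)
    (hPdisj : ∀ i j : Fin c, i ≠ j → Disjoint (P i) (P j))
    (hPne : ∀ i : Fin c, (P i).Nonempty)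
    (hPcard : ∀ i : Fin c, (P i).card ≤ 2)
    (hPunion : Finset.univ.biUnion P = I)
    (L₁ L₂ : Finset α)
    (hLunion : L₁ ∪ L₂ = I) (hLdisj : L₁ ∩ L₂ = ∅)
    (hsplit : ∀ i : Fin c, (P i).card = 2 →
      (P i ∩ L₁).card = 1 ∧ (P i ∩ L₂).card = 1)
    (R : Multiset (Finset α))
    (hR : c • ({I} : Multiset (Finset α)) ≤ R)
    (R' : Multiset (Finset α))
    (hR' : R' = (R - c • ({I} : Multiset (Finset α)))
      + (Finset.univ.val.map fun i : Fin c => I \ P i)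
      + {L₁, L₂})
    :
    ∀ x ∈ I, supp {x} R' = supp {x} R :=
  partial_suppression_single_support_general I c P hPdisj hPunion L₁ L₂ hLunion hLdisj R hR R' hR'
end

section
/- In the partial suppression setup, if x and y are distinct items belonging to the same part I_i of the partition of I, then s({x, y}, R') = s({x, y}, R) − 1. -/
variable {α : Type*} [DecidableEq α]

theorem partial_suppression_pair_same_part
    (I : Finset α) (hI : 2 ≤ I.card)
    (c : ℕ) (hc : c = (I.card + 1) / 2)
    (P : Fin c → Finset α)
    (hPdisj : ∀ i j : Fin c, i ≠ j → Disjoint (P i) (P j))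
    (hPne : ∀ i : Fin c, (P i).Nonempty)
    (hPcard : ∀ i : Fin c, (P i).card ≤ 2)
    (hPunion : Finset.univ.biUnion P = I)
    (L₁ L₂ : Finset α)
    (hLunion : L₁ ∪ L₂ = I) (hLdisj : L₁ ∩ L₂ = ∅)
    (hsplit : ∀ i : Fin c, (P i).card = 2 →
      (P i ∩ L₁).card = 1 ∧ (P i ∩ L₂).card = 1)
    (R : Multiset (Finset α))
    (hR : c • ({I} : Multiset (Finset α)) ≤ R)
    (R' : Multiset (Finset α))
    (hR' : R' = (R - c • ({I} : Multiset (Finset α)))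
      + (Finset.univ.val.map fun i : Fin c => I \ P i)
      + {L₁, L₂})
    (x y : α) (hxy : x ≠ y) (i : Fin c) (hx : x ∈ P i) (hy : y ∈ P i) :
    supp {x, y} R' = supp {x, y} R - 1 := by
  classical
  set p : Finset α → Prop := fun r => ({x, y} : Finset α) ⊆ r with hp
  have hPI : ∀ j : Fin c, P j ⊆ I := by
    intro j a ha
    rw [← hPunion]
    exact Finset.mem_biUnion.mpr ⟨j, Finset.mem_univ _, ha⟩
  have hxI : x ∈ I := hPI i hx
  have hyI : y ∈ I := hPI i hy
  have hxyI : ({x, y} : Finset α) ⊆ I := by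
    intro a ha
    rcases Finset.mem_insert.mp ha with h | h
    · subst h; exact hxI
    · rw [Finset.mem_singleton.mp h]; exact hyI
  have hxyP : ({x, y} : Finset α) ⊆ P i := by
    intro a ha
    rcases Finset.mem_insert.mp ha with h | h
    · subst h; exact hx
    · rw [Finset.mem_singleton.mp h]; exact hy
  have hcardxy : ({x, y} : Finset α).card = 2 := Finset.card_pair hxy
  have hPeq : P i = ({x, y} : Finset α) :=
    (Finset.eq_of_subset_of_card_le hxyP (by rw [hcardxy]; exact hPcard i)).symm
  have hPi2 : (P i).card = 2 := by rw [hPeq, hcardxy]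
  obtain ⟨hL1, hL2⟩ := hsplit i hPi2
  -- neither L₁ nor L₂ contains both x and y
  have hnotL1 : ¬ p L₁ := by
    intro h
    have : ({x, y} : Finset α) ⊆ P i ∩ L₁ := by
      rw [hPeq]; exact Finset.subset_inter (le_refl _) h
    have := Finset.card_le_card this
    omega
  have hnotL2 : ¬ p L₂ := by
    intro h
    have : ({x, y} : Finset α) ⊆ P i ∩ L₂ := by
      rw [hPeq]; exact Finset.subset_inter (le_refl _) h
    have := Finset.card_le_card this
    omega
  -- count in the map part
  have hmapcount :
      ((Finset.univ.val.map fun j : Fin c => I \ P j).filter p).card = c - 1 := by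
    rw [Multiset.filter_map, Multiset.card_map]
    have : ∀ j : Fin c, (p (I \ P j)) ↔ j ≠ i := by
      intro j
      constructor
      · intro h hji
        subst hji
        have := h (Finset.mem_insert_self x {y})
        exact (Finset.mem_sdiff.mp this).2 hx
      · intro hji a ha
        refine Finset.mem_sdiff.mpr ⟨hxyI ha, fun haj => ?_⟩
        exact Finset.disjoint_left.mp (hPdisj j i hji) haj (hxyP ha)
    have heq : Multiset.filter (p ∘ fun j => I \ P j) Finset.univ.val
        = Multiset.filter (fun j : Fin c => j ≠ i) Finset.univ.val :=
      Multiset.filter_congr (fun j _ => by simpa using this j)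
    rw [heq]
    have : (Multiset.filter (fun j : Fin c => j ≠ i) Finset.univ.val).card
        = (Finset.univ.filter (fun j : Fin c => j ≠ i)).card := rfl
    rw [this, Finset.filter_ne' Finset.univ i, Finset.card_erase_of_mem (Finset.mem_univ i),
      Finset.card_univ, Fintype.card_fin]
  have hfilterI : (Multiset.filter p (c • ({I} : Multiset (Finset α)))) =
      c • ({I} : Multiset (Finset α)) := by
    apply Multiset.filter_eq_self.mpr
    intro a ha
    have : a = I := by
      rw [Multiset.nsmul_singleton] at ha
      exact Multiset.eq_of_mem_replicate ha
    rw [this]; exact hxyI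
  have hle : c ≤ supp {x, y} R := by
    have := Multiset.card_le_card (Multiset.filter_le_filter p hR)
    rw [hfilterI] at this
    simpa [supp, Multiset.nsmul_singleton] using this
  have hc1 : 1 ≤ c := i.pos
  have : supp {x, y} R' = (supp {x, y} R - c) + (c - 1) := by
    rw [hR']
    simp only [supp, Multiset.filter_add, Multiset.card_add]
    rw [Multiset.filter_sub, hfilterI, Multiset.card_sub (by
      rw [← hfilterI]; exact Multiset.filter_le_filter _ hR), hmapcount]
    have h2 : (Multiset.filter p ({L₁, L₂} : Multiset (Finset α))).card = 0 := by
      rw [Multiset.card_eq_zero, Multiset.filter_eq_nil]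
      intro a ha
      rcases Multiset.mem_cons.mp ha with h | h
      · rw [h]; exact hnotL1
      · rw [Multiset.mem_singleton.mp h]; exact hnotL2
    rw [h2]
    simp [Multiset.nsmul_singleton, supp]
  rw [this]
  omega
end

section
/- In the partial suppression setup, if x and y are distinct items of I belonging to two different parts I_i ≠ I_j of the partition, and x and y lie in different ghost records (say x ∈ L₁ and y ∈ L₂), then s({x, y}, R') = s({x, y}, R) − 2. -/
variable {α : Type*} [DecidableEq α]

theorem partial_suppression_pair_diff_parts_diff_ghosts
    (I : Finset α) (hI : 2 ≤ I.card)
    (c : ℕ) (hc : c = (I.card + 1) / 2)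
    (P : Fin c → Finset α)
    (hPdisj : ∀ i j : Fin c, i ≠ j → Disjoint (P i) (P j))
    (hPne : ∀ i : Fin c, (P i).Nonempty)
    (hPcard : ∀ i : Fin c, (P i).card ≤ 2)
    (hPunion : Finset.univ.biUnion P = I)
    (L₁ L₂ : Finset α)
    (hLunion : L₁ ∪ L₂ = I) (hLdisj : L₁ ∩ L₂ = ∅)
    (hsplit : ∀ i : Fin c, (P i).card = 2 →
      (P i ∩ L₁).card = 1 ∧ (P i ∩ L₂).card = 1)
    (R : Multiset (Finset α))
    (hR : c • ({I} : Multiset (Finset α)) ≤ R)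
    (R' : Multiset (Finset α))
    (hR' : R' = (R - c • ({I} : Multiset (Finset α)))
      + (Finset.univ.val.map fun i : Fin c => I \ P i)
      + {L₁, L₂})
    (x y : α) (hxI : x ∈ I) (hyI : y ∈ I) (hxy : x ≠ y)
    (i j : Fin c) (hij : i ≠ j) (hx : x ∈ P i) (hy : y ∈ P j)
    (hghost : (x ∈ L₁ ∧ y ∈ L₂) ∨ (x ∈ L₂ ∧ y ∈ L₁)) :
    supp {x, y} R' = supp {x, y} R - 2 := by
  classical
  have hdisL : Disjoint L₁ L₂ := Finset.disjoint_iff_inter_eq_empty.2 hLdisj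
  have hsub : ({x, y} : Finset α) ⊆ I :=
    Finset.insert_subset hxI (Finset.singleton_subset_iff.2 hyI)
  have hadd : ∀ A B : Multiset (Finset α), supp {x, y} (A + B) = supp {x, y} A + supp {x, y} B := by
    intro A B; simp [supp, Multiset.filter_add]
  have hrep : supp {x, y} (c • ({I} : Multiset (Finset α))) = c := by
    rw [supp, Multiset.nsmul_singleton, Multiset.filter_eq_self.mpr, Multiset.card_replicate]
    intro r hr
    rw [Multiset.eq_of_mem_replicate hr]
    exact hsub
  have hc2 : 2 ≤ c := by
    have := i.2; have := j.2
    have : (i : ℕ) ≠ (j : ℕ) := fun h => hij (Fin.ext h)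
    omega
  have hcle : c ≤ supp {x, y} R := by
    rw [← hrep]
    exact Multiset.card_le_card (Multiset.filter_le_filter _ hR)
  have hsubpart : supp {x, y} (R - c • ({I} : Multiset (Finset α))) = supp {x, y} R - c := by
    simp only [supp] at hrep ⊢
    rw [Multiset.filter_sub, Multiset.card_sub (Multiset.filter_le_filter _ hR), hrep]
  have hxk : ∀ k : Fin c, x ∈ P k ↔ k = i := by
    intro k
    constructor
    · intro hm; by_contra hk
      exact (Finset.disjoint_left.mp (hPdisj k i hk)) hm hx
    · rintro rfl; exact hx
  have hyk : ∀ k : Fin c, y ∈ P k ↔ k = j := by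
    intro k
    constructor
    · intro hm; by_contra hk
      exact (Finset.disjoint_left.mp (hPdisj k j hk)) hm hy
    · rintro rfl; exact hy
  have hmid : supp {x, y} (Finset.univ.val.map fun k : Fin c => I \ P k) = c - 2 := by
    rw [supp, Multiset.filter_map, Multiset.card_map]
    have heq : (Multiset.filter ((fun r => ({x,y}:Finset α) ⊆ r) ∘ fun k : Fin c => I \ P k)
        Finset.univ.val) = (Finset.univ.filter fun k : Fin c => k ≠ i ∧ k ≠ j).val := by
      rw [Finset.filter_val]
      apply Multiset.filter_congr
      intro k _
      simp [Function.comp, Finset.insert_subset_iff, Finset.singleton_subset_iff,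
        Finset.mem_sdiff, hxI, hyI, hxk k, hyk k]
    rw [heq]
    show (Finset.univ.filter fun k : Fin c => k ≠ i ∧ k ≠ j).card = c - 2
    have h2 : (Finset.univ.filter fun k : Fin c => k ≠ i ∧ k ≠ j)
        = ({i, j} : Finset (Fin c))ᶜ := by
      ext k; simp [not_or]
    rw [h2, Finset.card_compl]
    simp [Finset.card_insert_of_notMem, hij]
  have hghost0 : supp {x, y} ({L₁, L₂} : Multiset (Finset α)) = 0 := by
    have h1 : ¬ ({x, y} : Finset α) ⊆ L₁ := by
      intro hs
      rcases hghost with ⟨hx1, hy2⟩ | ⟨hx2, hy1⟩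
      · exact Finset.disjoint_left.mp hdisL (hs (by simp)) hy2
      · exact Finset.disjoint_left.mp hdisL (hs (by simp)) hx2
    have h2 : ¬ ({x, y} : Finset α) ⊆ L₂ := by
      intro hs
      rcases hghost with ⟨hx1, hy2⟩ | ⟨hx2, hy1⟩
      · exact Finset.disjoint_left.mp hdisL hx1 (hs (by simp))
      · exact Finset.disjoint_left.mp hdisL hy1 (hs (by simp))
    simp [supp, Multiset.filter_eq_nil, h1, h2]
  rw [hR', hadd, hadd, hsubpart, hmid, hghost0]
  omega
end

section
/- In the partial suppression setup, for any two distinct items x, y ∈ I, the pair is strictly less supported than each of its items in R': s({x, y}, R') < s({x}, R') and s({x, y}, R') < s({y}, R'). -/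
variable {α : Type*} [DecidableEq α]

lemma supp_pair_lt_single {a b : α} {R : Multiset (Finset α)}
    (r : Finset α) (hr : r ∈ R) (ha : a ∈ r) (hb : b ∉ r) :
    supp {a, b} R < supp {a} R := by
  unfold supp
  apply Multiset.card_lt_card
  apply lt_of_le_of_ne
  · apply Multiset.monotone_filter_right
    intro s hs
    exact Finset.Subset.trans (by simp) hs
  · intro heq
    have h1 : r ∈ R.filter fun s => ({a} : Finset α) ⊆ s := by
      simp [Multiset.mem_filter, hr, ha]
    rw [← heq, Multiset.mem_filter] at h1
    exact hb (h1.2 (by simp))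

theorem partial_suppression_pair_lt_singletons
    (I : Finset α) (hI : 2 ≤ I.card)
    (c : ℕ) (hc : c = (I.card + 1) / 2)
    (P : Fin c → Finset α)
    (hPdisj : ∀ i j : Fin c, i ≠ j → Disjoint (P i) (P j))
    (hPne : ∀ i : Fin c, (P i).Nonempty)
    (hPcard : ∀ i : Fin c, (P i).card ≤ 2)
    (hPunion : Finset.univ.biUnion P = I)
    (L₁ L₂ : Finset α)
    (hLunion : L₁ ∪ L₂ = I) (hLdisj : L₁ ∩ L₂ = ∅)
    (hsplit : ∀ i : Fin c, (P i).card = 2 →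
      (P i ∩ L₁).card = 1 ∧ (P i ∩ L₂).card = 1)
    (R : Multiset (Finset α))
    (hR : c • ({I} : Multiset (Finset α)) ≤ R)
    (R' : Multiset (Finset α))
    (hR' : R' = (R - c • ({I} : Multiset (Finset α)))
      + (Finset.univ.val.map fun i : Fin c => I \ P i)
      + {L₁, L₂})
    (x y : α) (hxI : x ∈ I) (hyI : y ∈ I) (hxy : x ≠ y) :
    supp {x, y} R' < supp {x} R' ∧ supp {x, y} R' < supp {y} R' := by
  -- Membership helpers in R'
  have hL₁ : L₁ ∈ R' := by rw [hR']; simp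
  have hL₂ : L₂ ∈ R' := by rw [hR']; simp
  have hPi : ∀ i : Fin c, (I \ P i) ∈ R' := by
    intro i
    rw [hR']
    refine Multiset.mem_add.2 (Or.inl (Multiset.mem_add.2 (Or.inr ?_)))
    exact Multiset.mem_map.2 ⟨i, by simp, rfl⟩
  -- key witness lemma
  have key : ∀ a b : α, a ∈ I → b ∈ I → a ≠ b →
      ∃ r ∈ R', a ∈ r ∧ b ∉ r := by
    intro a b haI hbI hab
    obtain ⟨ia, _, hia⟩ := Finset.mem_biUnion.1 (hPunion ▸ haI)
    obtain ⟨ib, _, hib⟩ := Finset.mem_biUnion.1 (hPunion ▸ hbI)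
    by_cases hsame : b ∈ P ia
    · -- a, b in same part; use L₁ or L₂
      have hcard2 : (P ia).card = 2 := by
        have hsub : ({a, b} : Finset α) ⊆ P ia := by
          intro t ht
          rcases Finset.mem_insert.1 ht with h | h
          · exact h ▸ hia
          · exact (Finset.mem_singleton.1 h) ▸ hsame
        have h2 : ({a, b} : Finset α).card = 2 := Finset.card_pair hab
        have hge := Finset.card_le_card hsub
        have hle := hPcard ia
        omega
      obtain ⟨hc1, hc2⟩ := hsplit ia hcard2
      have haL : a ∈ L₁ ∨ a ∈ L₂ := by
        have : a ∈ L₁ ∪ L₂ := hLunion ▸ haI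
        exact Finset.mem_union.1 this
      rcases haL with h | h
      · refine ⟨L₁, hL₁, h, ?_⟩
        intro hbL
        have : ({a, b} : Finset α) ⊆ P ia ∩ L₁ := by
          intro t ht
          rcases Finset.mem_insert.1 ht with h' | h'
          · subst h'; exact Finset.mem_inter.2 ⟨hia, h⟩
          · rw [Finset.mem_singleton.1 h']; exact Finset.mem_inter.2 ⟨hsame, hbL⟩
        have := Finset.card_le_card this
        rw [Finset.card_pair hab, hc1] at this
        omega
      · refine ⟨L₂, hL₂, h, ?_⟩
        intro hbL
        have : ({a, b} : Finset α) ⊆ P ia ∩ L₂ := by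
          intro t ht
          rcases Finset.mem_insert.1 ht with h' | h'
          · subst h'; exact Finset.mem_inter.2 ⟨hia, h⟩
          · rw [Finset.mem_singleton.1 h']; exact Finset.mem_inter.2 ⟨hsame, hbL⟩
        have := Finset.card_le_card this
        rw [Finset.card_pair hab, hc2] at this
        omega
    · -- b in a different part ib; a ∉ P ib
      have hane : a ∉ P ib := by
        intro ha'
        have hne : ia ≠ ib := by
          intro h; exact hsame (h ▸ hib)
        simpa using (hPdisj ia ib hne).le_bot (Finset.mem_inter.2 ⟨hia, ha'⟩)
      exact ⟨I \ P ib, hPi ib, Finset.mem_sdiff.2 ⟨haI, hane⟩,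
        fun h => (Finset.mem_sdiff.1 h).2 hib⟩
  obtain ⟨r1, hr1, ha1, hb1⟩ := key x y hxI hyI hxy
  obtain ⟨r2, hr2, ha2, hb2⟩ := key y x hyI hxI hxy.symm
  constructor
  · exact supp_pair_lt_single r1 hr1 ha1 hb1
  · have : ({x, y} : Finset α) = {y, x} := Finset.pair_comm x y
    rw [this]
    exact supp_pair_lt_single r2 hr2 ha2 hb2
end

section
/- In the partial suppression setup, the support of the full itemset I drops by exactly c: s(I, R') = s(I, R) − c. -/
variable {α : Type*} [DecidableEq α]

theorem partial_suppression_full_itemset_support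
    (I : Finset α) (hI : 2 ≤ I.card)
    (c : ℕ) (hc : c = (I.card + 1) / 2)
    (P : Fin c → Finset α)
    (hPdisj : ∀ i j : Fin c, i ≠ j → Disjoint (P i) (P j))
    (hPne : ∀ i : Fin c, (P i).Nonempty)
    (hPcard : ∀ i : Fin c, (P i).card ≤ 2)
    (hPunion : Finset.univ.biUnion P = I)
    (L₁ L₂ : Finset α)
    (hLunion : L₁ ∪ L₂ = I) (hLdisj : L₁ ∩ L₂ = ∅)
    (hsplit : ∀ i : Fin c, (P i).card = 2 →
      (P i ∩ L₁).card = 1 ∧ (P i ∩ L₂).card = 1)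
    (R : Multiset (Finset α))
    (hR : c • ({I} : Multiset (Finset α)) ≤ R)
    (R' : Multiset (Finset α))
    (hR' : R' = (R - c • ({I} : Multiset (Finset α)))
      + (Finset.univ.val.map fun i : Fin c => I \ P i)
      + {L₁, L₂})
    :
    supp I R' = supp I R - c := by
  classical
  -- sum of part sizes equals |I|
  have hsum : ∑ i, (P i).card = I.card := by
    rw [← hPunion]
    exact (Finset.card_biUnion (fun i _ j _ h => hPdisj i j h)).symm
  -- some part has two elements
  have hex : ∃ i, (P i).card = 2 := by
    by_contra h
    push_neg at h
    have h1 : ∀ i : Fin c, (P i).card ≤ 1 := fun i => by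
      have h2 := hPcard i; have h3 := h i; omega
    have hle : I.card ≤ c := by
      calc I.card = ∑ i, (P i).card := hsum.symm
        _ ≤ ∑ _i : Fin c, 1 := Finset.sum_le_sum fun i _ => h1 i
        _ = c := by simp
    omega
  obtain ⟨i₀, hi₀⟩ := hex
  obtain ⟨h1, h2⟩ := hsplit i₀ hi₀
  have hL1ne : L₁.Nonempty := by
    have : (P i₀ ∩ L₁).Nonempty := Finset.card_pos.mp (by omega)
    obtain ⟨x, hx⟩ := this
    exact ⟨x, (Finset.mem_inter.mp hx).2⟩
  have hL2ne : L₂.Nonempty := by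
    have : (P i₀ ∩ L₂).Nonempty := Finset.card_pos.mp (by omega)
    obtain ⟨x, hx⟩ := this
    exact ⟨x, (Finset.mem_inter.mp hx).2⟩
  have hnotL1 : ¬ I ⊆ L₁ := by
    intro hsub
    obtain ⟨x, hx⟩ := hL2ne
    have hxI : x ∈ I := hLunion ▸ Finset.mem_union_right _ hx
    have : x ∈ L₁ ∩ L₂ := Finset.mem_inter.mpr ⟨hsub hxI, hx⟩
    simp [hLdisj] at this
  have hnotL2 : ¬ I ⊆ L₂ := by
    intro hsub
    obtain ⟨x, hx⟩ := hL1ne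
    have hxI : x ∈ I := hLunion ▸ Finset.mem_union_left _ hx
    have : x ∈ L₁ ∩ L₂ := Finset.mem_inter.mpr ⟨hx, hsub hxI⟩
    simp [hLdisj] at this
  have hnotP : ∀ i : Fin c, ¬ I ⊆ I \ P i := by
    intro i hsub
    obtain ⟨x, hx⟩ := hPne i
    have hxI : x ∈ I := by
      rw [← hPunion]
      exact Finset.mem_biUnion.mpr ⟨i, Finset.mem_univ i, hx⟩
    have := hsub hxI
    simp [Finset.mem_sdiff, hx] at this
  -- compute the support
  have hrep : c • ({I} : Multiset (Finset α)) = Multiset.replicate c I := by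
    simp [Multiset.nsmul_singleton]
  have hcardI : ((c • ({I} : Multiset (Finset α))).filter fun r => I ⊆ r) =
      Multiset.replicate c I := by
    rw [hrep, Multiset.filter_eq_self]
    intro r hr
    rw [Multiset.eq_of_mem_replicate hr]
  have hmap : ((Finset.univ.val.map fun i : Fin c => I \ P i).filter
      fun r => I ⊆ r) = 0 := by
    rw [Multiset.filter_map]
    apply Multiset.eq_zero_of_forall_notMem
    intro r hr
    obtain ⟨i, hi, _⟩ := Multiset.mem_map.mp hr
    exact absurd (Multiset.of_mem_filter hi) (hnotP i)
  have hpair : (({L₁, L₂} : Multiset (Finset α)).filter fun r => I ⊆ r) = 0 := by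
    simp [Multiset.filter_cons, Multiset.filter_singleton, hnotL1, hnotL2]
  rw [hR']
  simp only [supp, Multiset.filter_add, Multiset.card_add, hmap, hpair,
    Multiset.card_zero, add_zero, Multiset.filter_sub, hcardI]
  rw [Multiset.card_sub (hcardI ▸ Multiset.filter_le_filter _ hR),
    Multiset.card_replicate]
end

section
/- In the partial suppression setup, for every finset X ⊆ I, the support of X decreases by at most min(c, |X|): s(X, R') ≥ s(X, R) − min(c, |X|). -/
variable {α : Type*} [DecidableEq α]

theorem partial_suppression_subset_support_lower_bound
    (I : Finset α) (hI : 2 ≤ I.card)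
    (c : ℕ) (hc : c = (I.card + 1) / 2)
    (P : Fin c → Finset α)
    (hPdisj : ∀ i j : Fin c, i ≠ j → Disjoint (P i) (P j))
    (hPne : ∀ i : Fin c, (P i).Nonempty)
    (hPcard : ∀ i : Fin c, (P i).card ≤ 2)
    (hPunion : Finset.univ.biUnion P = I)
    (L₁ L₂ : Finset α)
    (hLunion : L₁ ∪ L₂ = I) (hLdisj : L₁ ∩ L₂ = ∅)
    (hsplit : ∀ i : Fin c, (P i).card = 2 →
      (P i ∩ L₁).card = 1 ∧ (P i ∩ L₂).card = 1)
    (R : Multiset (Finset α))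
    (hR : c • ({I} : Multiset (Finset α)) ≤ R)
    (R' : Multiset (Finset α))
    (hR' : R' = (R - c • ({I} : Multiset (Finset α)))
      + (Finset.univ.val.map fun i : Fin c => I \ P i)
      + {L₁, L₂})
    :
    ∀ X : Finset α, X ⊆ I → supp X R - min c X.card ≤ supp X R' := by
  intro X hX
  classical
  have hRdecomp : (R - c • ({I} : Multiset (Finset α))) + c • ({I} : Multiset (Finset α)) = R :=
    tsub_add_cancel_of_le hR
  set b := supp X (R - c • ({I} : Multiset (Finset α))) with hb
  have hrep : c • ({I} : Multiset (Finset α)) = Multiset.replicate c I := by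
    simp [Multiset.nsmul_singleton]
  have h1 : supp X R = b + c := by
    rw [← hRdecomp]
    simp only [supp, Multiset.filter_add, Multiset.card_add, hrep]
    have hf : Multiset.filter (fun r => X ⊆ r) (Multiset.replicate c I)
        = Multiset.replicate c I :=
      Multiset.filter_eq_self.mpr (by
        intro r hr; rw [Multiset.eq_of_mem_replicate hr]; exact hX)
    rw [hf, Multiset.card_replicate, hb, hrep]; rfl
  set G := Finset.univ.filter (fun i : Fin c => X ⊆ I \ P i) with hG
  have h2 : supp X R' = b + G.card + supp X ({L₁, L₂} : Multiset (Finset α)) := by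
    rw [hR']
    simp only [supp, Multiset.filter_add, Multiset.card_add]
    congr 1
    rw [Multiset.filter_map, Multiset.card_map]
    rfl
  set B := Finset.univ.filter (fun i : Fin c => ¬ X ⊆ I \ P i) with hB
  have hGB : G.card + B.card = c := by
    rw [hG, hB, Finset.card_filter_add_card_filter_not, Finset.card_univ,
      Fintype.card_fin]
  have hBne : ∀ i ∈ B, (X ∩ P i).Nonempty := by
    intro i hi
    rw [hB, Finset.mem_filter] at hi
    obtain ⟨x, hxX, hxn⟩ := Finset.not_subset.mp hi.2
    refine ⟨x, Finset.mem_inter.mpr ⟨hxX, ?_⟩⟩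
    by_contra hxP
    exact hxn (Finset.mem_sdiff.mpr ⟨hX hxX, hxP⟩)
  have hBX : B.card ≤ X.card := by
    have h41 : B.card ≤ (B.biUnion fun i => X ∩ P i).card := by
      rw [Finset.card_biUnion]
      · calc B.card = ∑ _i ∈ B, 1 := by simp
          _ ≤ ∑ i ∈ B, (X ∩ P i).card :=
            Finset.sum_le_sum (fun i hi => Finset.card_pos.mpr (hBne i hi))
      · intro i _ j _ hij
        exact Disjoint.mono (Finset.inter_subset_right) (Finset.inter_subset_right)
          (hPdisj i j hij)
    have h42 : (B.biUnion fun i => X ∩ P i) ⊆ X := by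
      intro x hx
      obtain ⟨i, _, hxi⟩ := Finset.mem_biUnion.mp hx
      exact (Finset.mem_inter.mp hxi).1
    exact h41.trans (Finset.card_le_card h42)
  omega
end

section
/- In the partial suppression setup with parameters k and m (natural numbers, k ≥ 1, m ≥ 1), if c ≤ m and s(I, R) ≥ k + c, then every finset X with X ⊆ I satisfies s(X, R') ≥ k. -/
variable {α : Type*} [DecidableEq α]

theorem partial_suppression_km_anonymity_card_le
    (I : Finset α) (hI : 2 ≤ I.card)
    (c : ℕ) (hc : c = (I.card + 1) / 2)
    (P : Fin c → Finset α)
    (hPdisj : ∀ i j : Fin c, i ≠ j → Disjoint (P i) (P j))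
    (hPne : ∀ i : Fin c, (P i).Nonempty)
    (hPcard : ∀ i : Fin c, (P i).card ≤ 2)
    (hPunion : Finset.univ.biUnion P = I)
    (L₁ L₂ : Finset α)
    (hLunion : L₁ ∪ L₂ = I) (hLdisj : L₁ ∩ L₂ = ∅)
    (hsplit : ∀ i : Fin c, (P i).card = 2 →
      (P i ∩ L₁).card = 1 ∧ (P i ∩ L₂).card = 1)
    (R : Multiset (Finset α))
    (hR : c • ({I} : Multiset (Finset α)) ≤ R)
    (R' : Multiset (Finset α))
    (hR' : R' = (R - c • ({I} : Multiset (Finset α)))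
      + (Finset.univ.val.map fun i : Fin c => I \ P i)
      + {L₁, L₂})
    (k m : ℕ) (hk : 1 ≤ k) (hm : 1 ≤ m)
    (hcm : c ≤ m) (hsupp : k + c ≤ supp I R) :
    ∀ X : Finset α, X ⊆ I → k ≤ supp X R' := by
  intro X hX
  -- monotonicity: supp I R ≤ supp X R
  have hmono : supp I R ≤ supp X R := by
    apply Multiset.card_le_card
    apply Multiset.monotone_filter_right
    intro r hr
    exact hX.trans hr
  -- supp X on the removed part equals c
  have hrem : supp X (c • ({I} : Multiset (Finset α))) = c := by
    rw [supp, Multiset.nsmul_singleton,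
      Multiset.filter_eq_self.mpr
        (fun a ha => by rw [Multiset.eq_of_mem_replicate ha]; exact hX),
      Multiset.card_replicate]
  -- decompose R
  have hdecomp : supp X (R - c • ({I} : Multiset (Finset α))) + c = supp X R := by
    have h := tsub_add_cancel_of_le hR
    calc supp X (R - c • ({I} : Multiset (Finset α))) + c
        = supp X (R - c • ({I} : Multiset (Finset α)))
          + supp X (c • ({I} : Multiset (Finset α))) := by rw [hrem]
      _ = supp X ((R - c • ({I} : Multiset (Finset α)))
          + c • ({I} : Multiset (Finset α))) := by
            simp [supp, Multiset.filter_add]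
      _ = supp X R := by rw [h]
  -- the remaining part is a sub-multiset of R'
  have hsub : (R - c • ({I} : Multiset (Finset α))) ≤ R' := by
    rw [hR']
    calc R - c • ({I} : Multiset (Finset α))
        ≤ (R - c • ({I} : Multiset (Finset α)))
          + (Finset.univ.val.map fun i : Fin c => I \ P i) := Multiset.le_add_right _ _
      _ ≤ _ := Multiset.le_add_right _ _
  have hmono2 : supp X (R - c • ({I} : Multiset (Finset α))) ≤ supp X R' :=
    Multiset.card_le_card (Multiset.filter_le_filter _ hsub)
  have : k ≤ supp X (R - c • ({I} : Multiset (Finset α))) := by omega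
  omega
end

section
/- In the partial suppression setup with parameters k and m (natural numbers, k ≥ 1, m ≥ 1), if m < c and s(I, R) ≥ k + m, then every finset X ⊆ I with |X| ≤ m satisfies s(X, R') ≥ k. -/
variable {α : Type*} [DecidableEq α]

theorem partial_suppression_km_anonymity_m_lt_card
    (I : Finset α) (hI : 2 ≤ I.card)
    (c : ℕ) (hc : c = (I.card + 1) / 2)
    (P : Fin c → Finset α)
    (hPdisj : ∀ i j : Fin c, i ≠ j → Disjoint (P i) (P j))
    (hPne : ∀ i : Fin c, (P i).Nonempty)
    (hPcard : ∀ i : Fin c, (P i).card ≤ 2)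
    (hPunion : Finset.univ.biUnion P = I)
    (L₁ L₂ : Finset α)
    (hLunion : L₁ ∪ L₂ = I) (hLdisj : L₁ ∩ L₂ = ∅)
    (hsplit : ∀ i : Fin c, (P i).card = 2 →
      (P i ∩ L₁).card = 1 ∧ (P i ∩ L₂).card = 1)
    (R : Multiset (Finset α))
    (hR : c • ({I} : Multiset (Finset α)) ≤ R)
    (R' : Multiset (Finset α))
    (hR' : R' = (R - c • ({I} : Multiset (Finset α)))
      + (Finset.univ.val.map fun i : Fin c => I \ P i)
      + {L₁, L₂})
    (k m : ℕ) (hk : 1 ≤ k) (hm : 1 ≤ m)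
    (hmc : m < c) (hsupp : k + m ≤ supp I R) :
    ∀ X : Finset α, X ⊆ I → X.card ≤ m → k ≤ supp X R' := by
  intro X hXI hXm
  classical
  have hmono : supp I R ≤ supp X R := by
    apply Multiset.card_le_card
    apply Multiset.monotone_filter_right
    intro r hr
    exact hXI.trans hr
  have hfilt_smul : ((c • ({I} : Multiset (Finset α))).filter fun r => X ⊆ r)
      = c • ({I} : Multiset (Finset α)) := by
    rw [Multiset.filter_eq_self]
    intro a ha
    rw [Multiset.nsmul_singleton] at ha
    rw [Multiset.eq_of_mem_replicate ha]
    exact hXI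
  have hle : (c • ({I} : Multiset (Finset α))).filter (fun r => X ⊆ r)
      ≤ R.filter (fun r => X ⊆ r) := Multiset.filter_le_filter _ hR
  have hsub : supp X (R - c • ({I} : Multiset (Finset α)))
      = supp X R - c := by
    unfold supp
    rw [Multiset.filter_sub, Multiset.card_sub hle, hfilt_smul]
    simp [Multiset.nsmul_singleton]
  -- count of parts meeting X is at most m
  set S : Finset (Fin c) := Finset.univ.filter (fun i => ¬ X ⊆ I \ P i) with hS
  have hScard : S.card ≤ m := by
    have hsubX : S.biUnion (fun i => X ∩ P i) ⊆ X := by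
      intro x hx
      simp only [Finset.mem_biUnion, Finset.mem_inter] at hx
      obtain ⟨i, _, hx, _⟩ := hx
      exact hx
    have hdisj : ∀ i ∈ S, ∀ j ∈ S, i ≠ j →
        Disjoint (X ∩ P i) (X ∩ P j) := by
      intro i _ j _ hij
      exact ((hPdisj i j hij).mono (Finset.inter_subset_right) (Finset.inter_subset_right))
    have hcardeq := Finset.card_biUnion hdisj
    have hone : ∀ i ∈ S, 1 ≤ (X ∩ P i).card := by
      intro i hi
      rw [hS, Finset.mem_filter] at hi
      obtain ⟨x, hx, hxP⟩ := Finset.not_subset.mp hi.2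
      have : x ∈ X ∩ P i := by
        refine Finset.mem_inter.mpr ⟨hx, ?_⟩
        by_contra hxPi
        exact hxP (Finset.mem_sdiff.mpr ⟨hXI hx, hxPi⟩)
      exact Finset.card_pos.mpr ⟨x, this⟩
    have h1 : S.card ≤ ∑ i ∈ S, (X ∩ P i).card := by
      simpa using Finset.sum_le_sum hone
    have h2 := Finset.card_le_card hsubX
    omega
  -- count of good new records
  have hgood : c - m ≤ ((Finset.univ.val.map fun i : Fin c => I \ P i).filter
      (fun r => X ⊆ r)).card := by
    rw [Multiset.filter_map]
    rw [Multiset.card_map]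
    have : (Multiset.filter ((fun r => X ⊆ r) ∘ fun i : Fin c => I \ P i)
        Finset.univ.val).card = (Finset.univ.filter (fun i : Fin c => X ⊆ I \ P i)).card := rfl
    rw [this]
    have := Finset.card_filter_add_card_filter_not
      (s := (Finset.univ : Finset (Fin c))) (p := fun i => X ⊆ I \ P i)
    simp only [Finset.card_univ, Fintype.card_fin] at this
    have hScard' : (Finset.univ.filter (fun i : Fin c => ¬ X ⊆ I \ P i)).card ≤ m := hScard
    omega
  -- assemble
  have hsplitR' : supp X R' = supp X (R - c • ({I} : Multiset (Finset α)))
      + ((Finset.univ.val.map fun i : Fin c => I \ P i).filter (fun r => X ⊆ r)).card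
      + (({L₁, L₂} : Multiset (Finset α)).filter (fun r => X ⊆ r)).card := by
    rw [hR']
    unfold supp
    rw [Multiset.filter_add, Multiset.filter_add, Multiset.card_add, Multiset.card_add]
  have hXR : k + m ≤ supp X R := le_trans hsupp hmono
  rw [hsplitR', hsub]
  omega
end
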